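/- (Theorem 3.1) Let z > w ≥ 2 and Δ ≥ w³, assume Assumption 1: G(w) ≤ (3/2)(log w)², Assumption 2: J(w,Δ)(log Δ)² ≤ 3 K(w²,Δ), and suppose ν = 1 − Σ_{w < p ≤ z, p prime} g(p) − (9/2) α² > 0, where α = (log w)/(log Δ). Then J W ≥ ν, where J = Σ_{d ≤ Δ, d squarefree} h(d). -/

import Mathlib

open Finset

/-- The multiplicative function supported on squarefree integers with
`h(p) = g(p) / (1 - g(p))` at primes. -/
noncomputable def hfun (g : ℕ → ℝ) (d : ℕ) : ℝ :=
  if Squarefree d then ∏ p ∈ d.primeFactors, g p / (1 - g p) else 0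

/-- `K(u) = Σ_{d ≤ u, d squarefree} h(d) (log(Δ/d))²`. -/
noncomputable def Kfun (g : ℕ → ℝ) (Δ u : ℝ) : ℝ :=
  ∑ d ∈ (Finset.Icc 1 ⌊u⌋₊).filter Squarefree,
    hfun g d * (Real.log (Δ / d)) ^ 2

/-! Multiplying `d` by a prime `p ∤ d` lowers `y_d = log(Δ/d)/H` by `log p / H`, or sends it to
`0` when `pd > Δ`; in both cases `y_d - y_{pd} = min(log p, log(Δ/d))/H`. For `p > w` this makes
the `p`-term at most `g(p) K/H²`; for `p ≤ w` at most `g(p) (log p)² J/H²`, and Assumptions 1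
and 2 bound the sum of the latter by `(9/2) α² K/H²` through `J (log Δ)² ≤ 3K`. Hence
`W ≥ ν K/H²`, and Cauchy–Schwarz `H² ≤ J K` finishes. -/

open Real

noncomputable def sieveWeight (Δ H : ℝ) (d : ℕ) : ℝ :=
  if Squarefree d ∧ (d : ℝ) ≤ Δ then H⁻¹ * log (Δ / d) else 0

section

variable {g : ℕ → ℝ} {w z Δ H : ℝ}

lemma mem_filter_squarefree_Icc_one_floor (hΔ : 0 ≤ Δ) {d : ℕ} :
    d ∈ (Icc 1 ⌊Δ⌋₊).filter Squarefree ↔ Squarefree d ∧ (d : ℝ) ≤ Δ := by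
  simp only [mem_filter, mem_Icc, Nat.le_floor_iff hΔ]
  exact ⟨fun ⟨⟨_, hdΔ⟩, hd⟩ => ⟨hd, hdΔ⟩,
    fun ⟨hd, hdΔ⟩ => ⟨⟨Nat.one_le_iff_ne_zero.2 hd.ne_zero, hdΔ⟩, hd⟩⟩

lemma log_div_nonneg_of_squarefree {d : ℕ} (hd : Squarefree d) (hdΔ : (d : ℝ) ≤ Δ) :
    0 ≤ log (Δ / d) :=
  log_nonneg <| (one_le_div (by exact_mod_cast Nat.pos_of_ne_zero hd.ne_zero)).2 hdΔ

lemma hfun_nonneg (hg : ∀ p : ℕ, p.Prime → 0 ≤ g p ∧ g p < 1) (d : ℕ) : 0 ≤ hfun g d := by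
  unfold hfun
  split_ifs
  · refine prod_nonneg fun p hp => ?_
    obtain ⟨hg0, hg1⟩ := hg p (Nat.prime_of_mem_primeFactors hp)
    exact div_nonneg hg0 (sub_nonneg.2 hg1.le)
  · exact le_rfl

@[simp]
lemma hfun_one : hfun g 1 = 1 := by
  simp [hfun]

lemma sieveWeight_sub_sieveWeight_mul {d p : ℕ} (hd : Squarefree d)
    (hdΔ : (d : ℝ) ≤ Δ) (hp : p.Prime) (hpd : ¬ p ∣ d) :
    sieveWeight Δ H d - sieveWeight Δ H (p * d) = H⁻¹ * min (log p) (log (Δ / d)) := by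
  have hd0 : (0 : ℝ) < d := by exact_mod_cast Nat.pos_of_ne_zero hd.ne_zero
  have hp0 : (0 : ℝ) < p := by exact_mod_cast hp.pos
  have hΔ0 : 0 < Δ := hd0.trans_le hdΔ
  rw [sieveWeight, if_pos ⟨hd, hdΔ⟩, sieveWeight]
  by_cases hpdΔ : ((p * d : ℕ) : ℝ) ≤ Δ
  · have hpd_sq : Squarefree (p * d) :=
      (Nat.squarefree_mul ((Nat.Prime.coprime_iff_not_dvd hp).2 hpd)).2 ⟨hp.squarefree, hd⟩
    have hp_le : (p : ℝ) ≤ Δ / d := by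
      rw [le_div_iff₀ hd0]; exact_mod_cast hpdΔ
    have hlog : log (Δ / d) = log p + log (Δ / (p * d)) := by
      rw [← log_mul hp0.ne' (by positivity)]; field_simp
    rw [if_pos ⟨hpd_sq, hpdΔ⟩, min_eq_left (log_le_log hp0 hp_le), hlog]
    push_cast
    ring
  · have hlt : Δ / d < p := by
      rw [div_lt_iff₀ hd0]; push_cast at hpdΔ; linarith
    rw [if_neg fun h => hpdΔ h.2, min_eq_right (log_le_log (by positivity) hlt.le), sub_zero]

lemma sum_hfun_mul_sieveWeight_sub_sq_le (hg : ∀ p : ℕ, p.Prime → 0 ≤ g p ∧ g p < 1)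
    (hΔ : 0 ≤ Δ) {p : ℕ} (hp : p.Prime)
    {F : ℕ → ℝ} (hF : ∀ d : ℕ, Squarefree d → (d : ℝ) ≤ Δ → min (log p) (log (Δ / d)) ≤ F d) :
    ∑ d ∈ (Icc 1 ⌊Δ⌋₊).filter (fun d => Squarefree d ∧ ¬ p ∣ d),
        hfun g d * (sieveWeight Δ H d - sieveWeight Δ H (p * d)) ^ 2
      ≤ H⁻¹ ^ 2 * ∑ d ∈ (Icc 1 ⌊Δ⌋₊).filter Squarefree, hfun g d * F d ^ 2 := by
  rw [mul_sum]
  calc _ ≤ ∑ d ∈ (Icc 1 ⌊Δ⌋₊).filter (fun d => Squarefree d ∧ ¬ p ∣ d),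
          H⁻¹ ^ 2 * (hfun g d * F d ^ 2) := by
        refine sum_le_sum fun d hd => ?_
        rw [← filter_filter, mem_filter, mem_filter_squarefree_Icc_one_floor hΔ] at hd
        obtain ⟨⟨hsq, hdΔ⟩, hpd⟩ := hd
        have hmin : 0 ≤ min (log p) (log (Δ / d)) :=
          le_min (log_nonneg (by exact_mod_cast hp.one_le))
            (log_div_nonneg_of_squarefree hsq hdΔ)
        rw [sieveWeight_sub_sieveWeight_mul hsq hdΔ hp hpd, mul_pow, mul_left_comm]
        gcongr
        · exact hfun_nonneg hg d
        · exact hF d hsq hdΔ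
    _ ≤ _ := by
        refine sum_le_sum_of_subset_of_nonneg (fun d => by simp_all) fun d _ _ => ?_
        exact mul_nonneg (sq_nonneg _) (mul_nonneg (hfun_nonneg hg d) (sq_nonneg _))

lemma log_le_sum_hfun_mul_log (hg : ∀ p : ℕ, p.Prime → 0 ≤ g p ∧ g p < 1) (hΔ : 1 ≤ Δ) :
    log Δ ≤ ∑ d ∈ (Icc 1 ⌊Δ⌋₊).filter Squarefree, hfun g d * log (Δ / d) := by
  have hΔ0 : 0 ≤ Δ := zero_le_one.trans hΔ
  have h1 : 1 ∈ (Icc 1 ⌊Δ⌋₊).filter Squarefree :=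
    (mem_filter_squarefree_Icc_one_floor hΔ0).2 ⟨squarefree_one, by simpa using hΔ⟩
  refine le_of_eq_of_le (by simp) (single_le_sum (fun d hd => ?_) h1)
  obtain ⟨hsq, hdΔ⟩ := (mem_filter_squarefree_Icc_one_floor hΔ0).1 hd
  exact mul_nonneg (hfun_nonneg hg d) (log_div_nonneg_of_squarefree hsq hdΔ)

lemma sq_sum_hfun_mul_log_le (hg : ∀ p : ℕ, p.Prime → 0 ≤ g p ∧ g p < 1) :
    (∑ d ∈ (Icc 1 ⌊Δ⌋₊).filter Squarefree, hfun g d * log (Δ / d)) ^ 2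
      ≤ (∑ d ∈ (Icc 1 ⌊Δ⌋₊).filter Squarefree, hfun g d) * Kfun g Δ Δ :=
  sum_sq_le_sum_mul_sum_of_sq_le_mul _ (fun d _ => hfun_nonneg hg d)
    (fun d _ => mul_nonneg (hfun_nonneg hg d) (sq_nonneg _)) fun d _ => le_of_eq (by ring)

lemma sum_hfun_mul_sieveWeight_sq (hΔ : 0 ≤ Δ) :
    ∑ d ∈ (Icc 1 ⌊Δ⌋₊).filter Squarefree, hfun g d * sieveWeight Δ H d ^ 2
      = H⁻¹ ^ 2 * Kfun g Δ Δ := by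
  rw [Kfun, mul_sum]
  refine sum_congr rfl fun d hd => ?_
  rw [sieveWeight, if_pos ((mem_filter_squarefree_Icc_one_floor hΔ).1 hd)]
  ring

lemma log_sq_le_three_mul_log_div_sq {d : ℝ} (hw : 1 ≤ w) (hΔ : w ^ 3 ≤ Δ) (hd : 1 ≤ d)
    (hdw : d ≤ w) : log Δ ^ 2 ≤ 3 * log (Δ / d) ^ 2 := by
  have hΔ0 : 0 < Δ := by nlinarith [one_le_pow₀ (n := 3) hw]
  have h3 : 3 * log w ≤ log Δ := by
    simpa [log_pow] using log_le_log (by positivity) hΔ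
  have hdw' : log d ≤ log w := log_le_log (by linarith) hdw
  have hlw : 0 ≤ log w := log_nonneg hw
  have hlow : 2 / 3 * log Δ ≤ log (Δ / d) := by
    rw [log_div hΔ0.ne' (by positivity)]; linarith
  nlinarith [mul_le_mul hlow hlow (by linarith) (by linarith)]

/-- The terms with `d ≤ w` have `log(Δ/d) ≥ (2/3) log Δ`; those with `d > w` are Assumption 2. -/
lemma sum_hfun_mul_log_sq_le (hg : ∀ p : ℕ, p.Prime → 0 ≤ g p ∧ g p < 1)
    (hw : 1 ≤ w) (hΔ : w ^ 3 ≤ Δ)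
    (hA2 : (∑ d ∈ (Icc 1 ⌊Δ⌋₊).filter (fun d : ℕ => Squarefree d ∧ w < (d : ℝ)), hfun g d)
        * log Δ ^ 2 ≤ 3 * (Kfun g Δ Δ - Kfun g Δ (w ^ 2))) :
    (∑ d ∈ (Icc 1 ⌊Δ⌋₊).filter Squarefree, hfun g d) * log Δ ^ 2 ≤ 3 * Kfun g Δ Δ := by
  have hsmall : (∑ d ∈ ((Icc 1 ⌊Δ⌋₊).filter Squarefree).filter (fun d : ℕ => ¬ w < d),
      hfun g d) * log Δ ^ 2 ≤ 3 * Kfun g Δ (w ^ 2) := by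
    rw [sum_mul, Kfun, mul_sum]
    calc _ ≤ ∑ d ∈ ((Icc 1 ⌊Δ⌋₊).filter Squarefree).filter (fun d : ℕ => ¬ w < d),
            3 * (hfun g d * log (Δ / d) ^ 2) := by
          refine sum_le_sum fun d hd => ?_
          simp only [mem_filter, mem_Icc, not_lt] at hd
          have := log_sq_le_three_mul_log_div_sq hw hΔ (by exact_mod_cast hd.1.1.1) hd.2
          nlinarith [hfun_nonneg hg d]
      _ ≤ _ := by
          refine sum_le_sum_of_subset_of_nonneg (fun d hd => ?_) fun d _ _ =>
            mul_nonneg zero_le_three (mul_nonneg (hfun_nonneg hg d) (sq_nonneg _))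
          simp only [mem_filter, mem_Icc, not_lt] at hd ⊢
          exact ⟨⟨hd.1.1.1, Nat.le_floor (hd.2.trans (by nlinarith))⟩, hd.1.2⟩
  rw [filter_filter] at hsmall
  rw [← sum_filter_not_add_sum_filter _ (fun d : ℕ => w < d), filter_filter, filter_filter,
    add_mul]
  linarith

lemma sum_large_primes_variation_le (hg : ∀ p : ℕ, p.Prime → 0 ≤ g p ∧ g p < 1)
    (hΔ : 0 ≤ Δ) :
    ∑ p ∈ ((range ⌈z⌉₊).filter (fun p : ℕ => p.Prime ∧ (p : ℝ) < z)).filter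
        (fun p : ℕ => w < p),
      g p * ∑ d ∈ (Icc 1 ⌊Δ⌋₊).filter (fun d => Squarefree d ∧ ¬ p ∣ d),
        hfun g d * (sieveWeight Δ H d - sieveWeight Δ H (p * d)) ^ 2
      ≤ (∑ p ∈ (range (⌊z⌋₊ + 1)).filter
          (fun p : ℕ => p.Prime ∧ w < (p : ℝ) ∧ (p : ℝ) ≤ z), g p) * (H⁻¹ ^ 2 * Kfun g Δ Δ) := by
  rw [sum_mul]
  calc _ ≤ ∑ p ∈ ((range ⌈z⌉₊).filter (fun p : ℕ => p.Prime ∧ (p : ℝ) < z)).filter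
          (fun p : ℕ => w < p), g p * (H⁻¹ ^ 2 * Kfun g Δ Δ) := by
        refine sum_le_sum fun p hp => ?_
        have hp' := (mem_filter.1 (mem_filter.1 hp).1).2.1
        exact mul_le_mul_of_nonneg_left
          (sum_hfun_mul_sieveWeight_sub_sq_le hg hΔ hp' fun _ _ _ => min_le_right _ _)
          (hg p hp').1
    _ ≤ _ := by
        refine sum_le_sum_of_subset_of_nonneg (fun p hp => ?_) fun p hp _ =>
          mul_nonneg (hg p (mem_filter.1 hp).2.1).1 (mul_nonneg (sq_nonneg _)
            (sum_nonneg fun d _ => mul_nonneg (hfun_nonneg hg d) (sq_nonneg _)))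
        simp only [mem_filter, mem_range] at hp ⊢
        exact ⟨Nat.lt_succ_of_le (Nat.le_floor hp.1.2.2.le), hp.1.2.1, hp.2, hp.1.2.2.le⟩

lemma sum_small_primes_variation_le (hg : ∀ p : ℕ, p.Prime → 0 ≤ g p ∧ g p < 1)
    (hΔ : 0 ≤ Δ) :
    ∑ p ∈ ((range ⌈z⌉₊).filter (fun p : ℕ => p.Prime ∧ (p : ℝ) < z)).filter
        (fun p : ℕ => ¬ w < p),
      g p * ∑ d ∈ (Icc 1 ⌊Δ⌋₊).filter (fun d => Squarefree d ∧ ¬ p ∣ d),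
        hfun g d * (sieveWeight Δ H d - sieveWeight Δ H (p * d)) ^ 2
      ≤ (∑ p ∈ (range (⌊w⌋₊ + 1)).filter Nat.Prime, g p * log p ^ 2)
        * (H⁻¹ ^ 2 * ∑ d ∈ (Icc 1 ⌊Δ⌋₊).filter Squarefree, hfun g d) := by
  rw [sum_mul]
  calc _ ≤ ∑ p ∈ ((range ⌈z⌉₊).filter (fun p : ℕ => p.Prime ∧ (p : ℝ) < z)).filter
          (fun p : ℕ => ¬ w < p),
          g p * log p ^ 2 * (H⁻¹ ^ 2 * ∑ d ∈ (Icc 1 ⌊Δ⌋₊).filter Squarefree, hfun g d) := by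
        refine sum_le_sum fun p hp => ?_
        have hp' := (mem_filter.1 (mem_filter.1 hp).1).2.1
        have h := sum_hfun_mul_sieveWeight_sub_sq_le hg hΔ hp' (H := H)
          (F := fun _ => log p) fun _ _ _ => min_le_left _ _
        rw [← sum_mul] at h
        rw [mul_assoc]
        refine mul_le_mul_of_nonneg_left (h.trans_eq ?_) (hg p hp').1
        ring
    _ ≤ _ := by
        refine sum_le_sum_of_subset_of_nonneg (fun p hp => ?_) fun p hp _ =>
          mul_nonneg (mul_nonneg (hg p (mem_filter.1 hp).2).1 (sq_nonneg _))
            (mul_nonneg (sq_nonneg _) (sum_nonneg fun d _ => hfun_nonneg hg d))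
        simp only [mem_filter, mem_range, not_lt] at hp ⊢
        exact ⟨Nat.lt_succ_of_le (Nat.le_floor hp.2), hp.1.2.1⟩

lemma sum_primes_variation_le (hg : ∀ p : ℕ, p.Prime → 0 ≤ g p ∧ g p < 1) (hΔ : 1 < Δ)
    (hA1 : ∑ p ∈ (range (⌊w⌋₊ + 1)).filter Nat.Prime, g p * log p ^ 2 ≤ 3 / 2 * log w ^ 2)
    (hJK : (∑ d ∈ (Icc 1 ⌊Δ⌋₊).filter Squarefree, hfun g d) * log Δ ^ 2 ≤ 3 * Kfun g Δ Δ) :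
    ∑ p ∈ (range ⌈z⌉₊).filter (fun p : ℕ => p.Prime ∧ (p : ℝ) < z),
      g p * ∑ d ∈ (Icc 1 ⌊Δ⌋₊).filter (fun d => Squarefree d ∧ ¬ p ∣ d),
        hfun g d * (sieveWeight Δ H d - sieveWeight Δ H (p * d)) ^ 2
      ≤ ((∑ p ∈ (range (⌊z⌋₊ + 1)).filter
          (fun p : ℕ => p.Prime ∧ w < (p : ℝ) ∧ (p : ℝ) ≤ z), g p)
        + 9 / 2 * (log w / log Δ) ^ 2) * (H⁻¹ ^ 2 * Kfun g Δ Δ) := by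
  set J := ∑ d ∈ (Icc 1 ⌊Δ⌋₊).filter Squarefree, hfun g d
  have hlogΔ : 0 < log Δ := log_pos hΔ
  have hJ : J ≤ 3 * Kfun g Δ Δ / log Δ ^ 2 := (le_div_iff₀ (by positivity)).2 hJK
  have hsmall : (∑ p ∈ (range (⌊w⌋₊ + 1)).filter Nat.Prime, g p * log p ^ 2) * (H⁻¹ ^ 2 * J)
      ≤ 9 / 2 * (log w / log Δ) ^ 2 * (H⁻¹ ^ 2 * Kfun g Δ Δ) :=
    calc _ ≤ 3 / 2 * log w ^ 2 * (H⁻¹ ^ 2 * (3 * Kfun g Δ Δ / log Δ ^ 2)) :=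
          mul_le_mul hA1 (by gcongr)
            (mul_nonneg (sq_nonneg _) (sum_nonneg fun d _ => hfun_nonneg hg d)) (by positivity)
      _ = _ := by field_simp; ring
  rw [← sum_filter_add_sum_filter_not _ (fun p : ℕ => w < p)]
  have hΔ0 : 0 ≤ Δ := zero_le_one.trans hΔ.le
  linarith [sum_large_primes_variation_le (w := w) (z := z) (H := H) hg hΔ0,
    sum_small_primes_variation_le (w := w) (z := z) (H := H) hg hΔ0]

end

theorem theorem_3_1_general
    (Δ w z : ℝ) (hw : 2 ≤ w) (hΔ : w ^ 3 ≤ Δ)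
    (g : ℕ → ℝ)
    (hgp : ∀ p : ℕ, p.Prime → 0 ≤ g p ∧ g p < 1)
    (H : ℝ)
    (hH : H = ∑ d ∈ (Finset.Icc 1 ⌊Δ⌋₊).filter Squarefree,
      hfun g d * Real.log (Δ / d))
    (y : ℕ → ℝ)
    (hy : ∀ d : ℕ, y d =
      if Squarefree d ∧ (d : ℝ) ≤ Δ then H⁻¹ * Real.log (Δ / d) else 0)
    (W : ℝ)
    (hW : W = (∑ d ∈ (Finset.Icc 1 ⌊Δ⌋₊).filter Squarefree, hfun g d * y d ^ 2)
      - ∑ p ∈ (Finset.range ⌈z⌉₊).filter (fun p : ℕ => p.Prime ∧ (p : ℝ) < z),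
          g p * ∑ d ∈ (Finset.Icc 1 ⌊Δ⌋₊).filter (fun d => Squarefree d ∧ ¬ p ∣ d),
            hfun g d * (y d - y (p * d)) ^ 2)
    -- Assumption 1: `G(w) ≤ (3/2)(log w)²`
    (hA1 : ∑ p ∈ (Finset.range (⌊w⌋₊ + 1)).filter Nat.Prime,
      g p * (Real.log p) ^ 2 ≤ 3 / 2 * (Real.log w) ^ 2)
    -- Assumption 2: `J(w,Δ)(log Δ)² ≤ 3 K(w²,Δ)`
    (hA2 : (∑ d ∈ (Finset.Icc 1 ⌊Δ⌋₊).filter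
        (fun d : ℕ => Squarefree d ∧ w < (d : ℝ)), hfun g d) * (Real.log Δ) ^ 2
      ≤ 3 * (Kfun g Δ Δ - Kfun g Δ (w ^ 2)))
    -- `ν = 1 − Σ_{w<p≤z} g(p) − (9/2) α² > 0`
    (ν : ℝ)
    (hν : ν = 1 - (∑ p ∈ (Finset.range (⌊z⌋₊ + 1)).filter
          (fun p : ℕ => p.Prime ∧ w < (p : ℝ) ∧ (p : ℝ) ≤ z), g p)
        - 9 / 2 * (Real.log w / Real.log Δ) ^ 2)
    (hνpos : 0 < ν) :
    (∑ d ∈ (Finset.Icc 1 ⌊Δ⌋₊).filter Squarefree, hfun g d) * W ≥ ν := by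
  obtain rfl : y = sieveWeight Δ H := funext hy
  have hΔ1 : 1 < Δ := by nlinarith [pow_le_pow_left₀ zero_le_two hw 3]
  set J := ∑ d ∈ (Icc 1 ⌊Δ⌋₊).filter Squarefree, hfun g d
  set K := Kfun g Δ Δ
  have hH_pos : 0 < H := hH ▸ (log_pos hΔ1).trans_le (log_le_sum_hfun_mul_log hgp hΔ1.le)
  have hWν : H⁻¹ ^ 2 * K * ν ≤ W := by
    rw [hW, sum_hfun_mul_sieveWeight_sq (by positivity), hν]
    linarith [sum_primes_variation_le (z := z) (H := H) hgp hΔ1 hA1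
      (sum_hfun_mul_log_sq_le hgp (by linarith) hΔ hA2)]
  have hJK : 1 ≤ J * (H⁻¹ ^ 2 * K) := by
    rw [show J * (H⁻¹ ^ 2 * K) = J * K / H ^ 2 by ring, one_le_div (by positivity), hH]
    exact sq_sum_hfun_mul_log_le hgp
  calc ν ≤ J * (H⁻¹ ^ 2 * K) * ν := le_mul_of_one_le_left hνpos.le hJK
    _ = J * (H⁻¹ ^ 2 * K * ν) := by ring
    _ ≤ J * W := mul_le_mul_of_nonneg_left hWν (sum_nonneg fun d _ => hfun_nonneg hgp d)

/-- **Theorem 3.1.** Under Assumptions 1 and 2, if `z > w ≥ 2`, `Δ ≥ w³` and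
`ν = 1 − Σ_{w<p≤z} g(p) − (9/2) α² > 0` with `α = log w / log Δ`, then `J W ≥ ν`
where `J = Σ_{d ≤ Δ, d squarefree} h(d)`. -/
theorem theorem_3_1
    (Δ w z : ℝ) (hw : 2 ≤ w) (hwz : w < z) (hΔ : w ^ 3 ≤ Δ)
    (g : ℕ → ℝ) (hg1 : g 1 = 1)
    (hgmult : ∀ m n : ℕ, Nat.Coprime m n → g (m * n) = g m * g n)
    (hgp : ∀ p : ℕ, p.Prime → 0 ≤ g p ∧ g p < 1)
    (H : ℝ)
    (hH : H = ∑ d ∈ (Finset.Icc 1 ⌊Δ⌋₊).filter Squarefree,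
      hfun g d * Real.log (Δ / d))
    (y : ℕ → ℝ)
    (hy : ∀ d : ℕ, y d =
      if Squarefree d ∧ (d : ℝ) ≤ Δ then H⁻¹ * Real.log (Δ / d) else 0)
    (W : ℝ)
    (hW : W = (∑ d ∈ (Finset.Icc 1 ⌊Δ⌋₊).filter Squarefree, hfun g d * y d ^ 2)
      - ∑ p ∈ (Finset.range ⌈z⌉₊).filter (fun p : ℕ => p.Prime ∧ (p : ℝ) < z),
          g p * ∑ d ∈ (Finset.Icc 1 ⌊Δ⌋₊).filter (fun d => Squarefree d ∧ ¬ p ∣ d),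
            hfun g d * (y d - y (p * d)) ^ 2)
    -- Assumption 1: `G(w) ≤ (3/2)(log w)²`
    (hA1 : ∑ p ∈ (Finset.range (⌊w⌋₊ + 1)).filter Nat.Prime,
      g p * (Real.log p) ^ 2 ≤ 3 / 2 * (Real.log w) ^ 2)
    -- Assumption 2: `J(w,Δ)(log Δ)² ≤ 3 K(w²,Δ)`
    (hA2 : (∑ d ∈ (Finset.Icc 1 ⌊Δ⌋₊).filter
        (fun d : ℕ => Squarefree d ∧ w < (d : ℝ)), hfun g d) * (Real.log Δ) ^ 2
      ≤ 3 * (Kfun g Δ Δ - Kfun g Δ (w ^ 2)))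
    -- `ν = 1 − Σ_{w<p≤z} g(p) − (9/2) α² > 0`
    (ν : ℝ)
    (hν : ν = 1 - (∑ p ∈ (Finset.range (⌊z⌋₊ + 1)).filter
          (fun p : ℕ => p.Prime ∧ w < (p : ℝ) ∧ (p : ℝ) ≤ z), g p)
        - 9 / 2 * (Real.log w / Real.log Δ) ^ 2)
    (hνpos : 0 < ν) :
    (∑ d ∈ (Finset.Icc 1 ⌊Δ⌋₊).filter Squarefree, hfun g d) * W ≥ ν :=
  theorem_3_1_general Δ w z hw hΔ g hgp H hH y hy W hW hA1 hA2 ν hν hνpos
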